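/- arXiv:0804.3963 — 8 statements merged into one kernel-verified Lean document; each statement's English description precedes it below -/
import Mathlib

section
/- Suppose a group G splits as an amalgamated free product G = A *_C B. If there is no nontrivial homomorphism from G to ℤ and no nontrivial homomorphism from C to ℤ, then there is no nontrivial homomorphism from A to ℤ and no nontrivial homomorphism from B to ℤ. -/
open Monoid

/-- If `G = A *_C B` is an amalgamated free product (pushout of injective maps
from `C` into the family of groups), and neither `G` nor `C` admits a nontrivial
homomorphism to `ℤ`, then none of the factor groups admits a nontrivial
homomorphism to `ℤ`. -/
theorem factors_no_nontrivial_hom_to_int {ι : Type*} {C : Type*} {G : ι → Type*}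
    [Group C] [∀ i, Group (G i)] (φ : ∀ i, C →* G i)
    (hinj : ∀ i, Function.Injective (φ i))
    (hG : ∀ f : PushoutI φ →* Multiplicative ℤ, f = 1)
    (hC : ∀ f : C →* Multiplicative ℤ, f = 1) :
    ∀ i, ∀ f : G i →* Multiplicative ℤ, f = 1 := by
  intro i f
  classical
  have key : f.comp (φ i) = 1 := hC _
  let g : ∀ j, G j →* Multiplicative ℤ := fun j => if h : j = i then h ▸ f else 1
  have hg : ∀ j, (g j).comp (φ j) = (1 : C →* Multiplicative ℤ) := by
    intro j
    by_cases h : j = i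
    · subst h; simpa [g] using key
    · ext x; simp [g, h]
  have hlift := hG (PushoutI.lift g 1 hg)
  have h2 : (PushoutI.lift g 1 hg).comp (PushoutI.of i) = f := by
    ext x
    simp only [MonoidHom.comp_apply, PushoutI.lift_of]
    simp [g]
  rw [hlift] at h2
  rw [← h2]
  ext x; simp
end

section
/- Let (W,S) be a Coxeter system and suppose a, b ∈ S satisfy m(a,b) = ∞ (i.e., ab has infinite order). Let C = S − {a,b}. If the visual subgroup ⟨C⟩ is normal in ⟨{a} ∪ C⟩, then a commutes with every element of C. -/
/-!
Let `W` act on `⊕_{i ∈ B} ℝ e_i` by its geometric representation: `s_i` is the reflection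
`v ↦ v - 2 B(e_i, v) e_i` for the symmetric form with `B(e_i, e_j) = -cos (π / m(i,j))`
(and `-1` when `m(i,j) = ∞`). A generator `s_c` with `c ≠ a` leaves the `e_a`-coordinate
unchanged, hence so does every element of `⟨C⟩`. Normality puts `s_a s_c s_a` in `⟨C⟩`, while
the `e_a`-coordinate of `s_a s_c s_a · e_a` is `1 - 4 B(e_a, e_c)²`. So `B(e_a, e_c) = 0`, which
forces `m(a,c) = 2`.
-/

open Real

namespace Real

theorem sin_add_two_mul_eq (x θ : ℝ) : sin (x + 2 * θ) = 2 * cos θ * sin (x + θ) - sin x := by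
  rw [sin_add, sin_add, sin_two_mul, cos_two_mul]
  ring

end Real

namespace CoxeterMatrix

variable {B : Type*} (M : CoxeterMatrix B)

noncomputable def formCoeff (i j : B) : ℝ :=
  if M i j = 0 then -1 else -cos (π / M i j)

lemma formCoeff_comm (i j : B) : M.formCoeff i j = M.formCoeff j i := by
  rw [formCoeff, formCoeff, M.symmetric]

@[simp]
lemma formCoeff_self (i : B) : M.formCoeff i i = 1 := by
  simp [formCoeff]

lemma eq_two_of_formCoeff_eq_zero {i j : B} (h : M.formCoeff i j = 0) : M i j = 2 := by
  unfold formCoeff at h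
  split_ifs at h with h0
  · norm_num at h
  obtain h1 | h2 | h3 : M i j = 1 ∨ M i j = 2 ∨ 3 ≤ M i j := by omega
  · simp [h1] at h
  · exact h2
  · have hpos : 0 < π / M i j := by positivity
    have hlt : π / M i j < π / 2 :=
      div_lt_div_of_pos_left pi_pos two_pos (by exact_mod_cast by omega)
    linarith [cos_pos_of_mem_Ioo ⟨by linarith, hlt⟩]

noncomputable def pairing (i : B) : (B →₀ ℝ) →ₗ[ℝ] ℝ :=
  Finsupp.linearCombination ℝ (M.formCoeff i)

@[simp]
lemma pairing_single (i j : B) (x : ℝ) :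
    M.pairing i (Finsupp.single j x) = x * M.formCoeff i j := by
  simp [pairing, Finsupp.linearCombination_single, smul_eq_mul]

noncomputable def geomReflection (i : B) : Module.End ℝ (B →₀ ℝ) :=
  LinearMap.id - (Finsupp.lsingle i).comp (2 • M.pairing i)

lemma geomReflection_apply (i : B) (v : B →₀ ℝ) :
    M.geomReflection i v = v - Finsupp.single i (2 * M.pairing i v) := by
  simp [geomReflection]

lemma geomReflection_apply_of_pairing_eq_zero {i : B} {v : B →₀ ℝ} (h : M.pairing i v = 0) :
    M.geomReflection i v = v := by
  simp [geomReflection_apply, h]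

lemma geomReflection_apply_apply_of_ne {i a : B} (h : i ≠ a) (v : B →₀ ℝ) :
    M.geomReflection i v a = v a := by
  simp [geomReflection_apply, h]

lemma geomReflection_apply_apply_self (i : B) (v : B →₀ ℝ) :
    M.geomReflection i v i = v i - 2 * M.pairing i v := by
  simp [geomReflection_apply]

lemma geomReflection_single_self (i : B) (x : ℝ) :
    M.geomReflection i (Finsupp.single i x) = Finsupp.single i (-x) := by
  rw [geomReflection_apply, pairing_single, formCoeff_self, ← Finsupp.single_sub]
  ring_nf

lemma geomReflection_mul_self (i : B) : M.geomReflection i * M.geomReflection i = 1 := by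
  refine LinearMap.ext fun v => ?_
  rw [Module.End.mul_apply, M.geomReflection_apply i v, map_sub, geomReflection_single_self,
    geomReflection_apply, Module.End.one_apply, Finsupp.single_neg]
  abel

lemma geomReflection_single_add_single_left (i j : B) (p q : ℝ) :
    M.geomReflection i (Finsupp.single i p + Finsupp.single j q) =
      Finsupp.single i (-2 * M.formCoeff i j * q - p) + Finsupp.single j q := by
  rw [geomReflection_apply, map_add, pairing_single, pairing_single, formCoeff_self,
    add_sub_right_comm, ← Finsupp.single_sub]
  ring_nf

lemma geomReflection_single_add_single_right (i j : B) (p q : ℝ) :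
    M.geomReflection j (Finsupp.single i p + Finsupp.single j q) =
      Finsupp.single i p + Finsupp.single j (-2 * M.formCoeff i j * p - q) := by
  rw [geomReflection_apply, map_add, pairing_single, pairing_single, formCoeff_self,
    add_sub_assoc, ← Finsupp.single_sub, M.formCoeff_comm j i]
  ring_nf


lemma exists_pairing_sub_single_sub_single_eq_zero {i j : B} (h : M.formCoeff i j ^ 2 ≠ 1)
    (v : B →₀ ℝ) : ∃ x y : ℝ,
      M.pairing i (v - Finsupp.single i x - Finsupp.single j y) = 0 ∧
      M.pairing j (v - Finsupp.single i x - Finsupp.single j y) = 0 := by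
  set κ := M.formCoeff i j
  have hdet : 1 - κ ^ 2 ≠ 0 := sub_ne_zero.mpr (Ne.symm h)
  refine ⟨(M.pairing i v - κ * M.pairing j v) / (1 - κ ^ 2),
    (M.pairing j v - κ * M.pairing i v) / (1 - κ ^ 2), ?_, ?_⟩ <;>
  · simp only [map_sub, pairing_single, formCoeff_self, M.formCoeff_comm j i]
    field_simp
    ring

lemma geomReflection_mul_pow_apply_sin {i j : B} (hm : M i j ≠ 0) (n : ℕ) (α : ℝ) :
    ((M.geomReflection i * M.geomReflection j) ^ n)
        (Finsupp.single i (sin (α + π / M i j)) + Finsupp.single j (sin α)) =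
      Finsupp.single i (sin (α + n * (2 * (π / M i j)) + π / M i j)) +
        Finsupp.single j (sin (α + n * (2 * (π / M i j)))) := by
  set θ := π / M i j
  have hκ : M.formCoeff i j = -cos θ := if_neg hm
  induction n generalizing α with
  | zero => simp
  | succ n ih =>
    have hj : M.geomReflection j (Finsupp.single i (sin (α + θ)) + Finsupp.single j (sin α)) =
        Finsupp.single i (sin (α + θ)) + Finsupp.single j (sin (α + 2 * θ)) := by
      rw [geomReflection_single_add_single_right, hκ, sin_add_two_mul_eq]
      ring_nf
    have hi : M.geomReflection i
        (Finsupp.single i (sin (α + θ)) + Finsupp.single j (sin (α + 2 * θ))) =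
        Finsupp.single i (sin (α + 2 * θ + θ)) + Finsupp.single j (sin (α + 2 * θ)) := by
      rw [geomReflection_single_add_single_left, hκ, add_right_comm α,
        sin_add_two_mul_eq (α + θ), add_assoc α θ θ, ← two_mul]
      ring_nf
    rw [pow_succ, Module.End.mul_apply, Module.End.mul_apply, hj, hi, ih]
    push_cast
    ring_nf

/-- On the span of `e_i, e_j`, `σ_i σ_j` is the rotation by `2π / m(i,j)` that shifts the
parameter of the ellipse `α ↦ sin (α + π / m(i,j)) e_i + sin α e_j`; on the form-orthogonal
complement of that span it is the identity. -/
lemma geomReflection_mul_pow_eq_one {i j : B} (hm : 2 ≤ M i j) :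
    (M.geomReflection i * M.geomReflection j) ^ M i j = 1 := by
  set θ := π / M i j with hθ
  set ρ := M.geomReflection i * M.geomReflection j
  have hθ_pos : 0 < θ := by positivity
  have hθ_lt : θ < π := div_lt_self pi_pos (by exact_mod_cast hm)
  have hs : sin θ ≠ 0 := (sin_pos_of_pos_of_lt_pi hθ_pos hθ_lt).ne'
  have hκ : M.formCoeff i j ^ 2 ≠ 1 := by
    rw [formCoeff, if_neg (by omega), neg_sq, ← hθ]
    intro h
    exact pow_ne_zero 2 hs (by linarith [sin_sq_add_cos_sq θ])
  have hperiod : ∀ α,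
      (ρ ^ M i j) (Finsupp.single i (sin (α + θ)) + Finsupp.single j (sin α)) =
      Finsupp.single i (sin (α + θ)) + Finsupp.single j (sin α) := by
    intro α
    have h2π : (M i j : ℝ) * (2 * θ) = 2 * π := by
      rw [hθ]
      field_simp
    rw [geomReflection_mul_pow_apply_sin M (by omega), ← hθ, h2π, add_right_comm,
      sin_add_two_pi, sin_add_two_pi]
  have hi : ∀ x, (ρ ^ M i j) (Finsupp.single i x) = Finsupp.single i x := by
    intro x
    have h := hperiod 0
    simp only [zero_add, sin_zero, Finsupp.single_zero, add_zero] at h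
    rw [← div_mul_cancel₀ x hs, ← smul_eq_mul, ← Finsupp.smul_single, map_smul, h]
  have hj : ∀ y, (ρ ^ M i j) (Finsupp.single j y) = Finsupp.single j y := by
    intro y
    have h := hperiod (-θ)
    simp only [neg_add_cancel, sin_zero, sin_neg, Finsupp.single_zero, zero_add] at h
    rw [← div_mul_cancel₀ y (neg_ne_zero.mpr hs), ← smul_eq_mul, ← Finsupp.smul_single,
      map_smul, h]
  refine LinearMap.ext fun v => ?_
  obtain ⟨x, y, hzi, hzj⟩ := M.exists_pairing_sub_single_sub_single_eq_zero hκ v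
  set z := v - Finsupp.single i x - Finsupp.single j y
  have hρz : ρ z = z := by
    rw [Module.End.mul_apply, geomReflection_apply_of_pairing_eq_zero _ hzj,
      geomReflection_apply_of_pairing_eq_zero _ hzi]
  have hv : v = z + Finsupp.single i x + Finsupp.single j y := by
    simp only [z]
    abel
  rw [hv, map_add, map_add, Module.End.pow_apply, Function.iterate_fixed hρz, hi, hj,
    Module.End.one_apply]

lemma isLiftable_geomReflection : M.IsLiftable M.geomReflection := by
  intro i j
  obtain h | h | h : M i j = 0 ∨ M i j = 1 ∨ 2 ≤ M i j := by omega
  · rw [h, pow_zero]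
  · obtain rfl : i = j := by_contra fun hne => M.off_diagonal i j hne h
    rw [h, pow_one, geomReflection_mul_self]
  · exact M.geomReflection_mul_pow_eq_one h

end CoxeterMatrix

namespace CoxeterSystem

variable {B W : Type*} [Group W] {M : CoxeterMatrix B} (cs : CoxeterSystem M W)

noncomputable def geomRep : W →* Module.End ℝ (B →₀ ℝ) :=
  cs.lift ⟨M.geomReflection, M.isLiftable_geomReflection⟩

@[simp]
lemma geomRep_simple (i : B) : cs.geomRep (cs.simple i) = M.geomReflection i :=
  cs.lift_apply_simple _ i

lemma geomRep_apply_apply_of_mem_closure {C : Set B} {a : B} (ha : a ∉ C) {w : W}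
    (hw : w ∈ Subgroup.closure (cs.simple '' C)) (v : B →₀ ℝ) : cs.geomRep w v a = v a := by
  induction hw using Subgroup.closure_induction generalizing v with
  | mem _ h =>
    obtain ⟨i, hi, rfl⟩ := h
    rw [geomRep_simple]
    exact M.geomReflection_apply_apply_of_ne (ne_of_mem_of_not_mem hi ha) v
  | one => rw [map_one, Module.End.one_apply]
  | mul w₁ w₂ _ _ ih₁ ih₂ => rw [map_mul, Module.End.mul_apply, ih₁, ih₂]
  | inv w _ ih =>
    rw [← ih, ← Module.End.mul_apply, ← map_mul, mul_inv_cancel, map_one,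
      Module.End.one_apply]

lemma geomRep_conj_single_self_apply_self {a c : B} (hca : c ≠ a) :
    cs.geomRep (cs.simple a * cs.simple c * cs.simple a) (Finsupp.single a 1) a =
      1 - 4 * M.formCoeff a c ^ 2 := by
  rw [map_mul, map_mul, Module.End.mul_apply, Module.End.mul_apply, geomRep_simple,
    geomRep_simple, M.geomReflection_single_self, M.geomReflection_apply_apply_self,
    M.geomReflection_apply_apply_of_ne hca, M.geomReflection_apply, map_sub, M.pairing_single,
    M.pairing_single, M.pairing_single, M.formCoeff_self, M.formCoeff_comm c a,
    Finsupp.single_eq_same]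
  ring

lemma commute_simple_of_eq_two {i j : B} (h : M i j = 2) : Commute (cs.simple i) (cs.simple j) := by
  have hsq := cs.simple_mul_simple_pow i j
  rw [h, pow_two] at hsq
  show cs.simple i * cs.simple j = cs.simple j * cs.simple i
  simpa [mul_inv_rev, cs.inv_simple] using eq_inv_of_mul_eq_one_left hsq

end CoxeterSystem

theorem simple_commutes_of_normal_visual_general {B : Type*} {W : Type*} [Group W]
    (M : CoxeterMatrix B) (cs : CoxeterSystem M W)
    (a b : B)
    (C : Set B) (hC : C = Set.univ \ {a, b})
    (hnormal : ∀ g ∈ Subgroup.closure (cs.simple '' ({a} ∪ C)),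
      ∀ h ∈ Subgroup.closure (cs.simple '' C),
        g * h * g⁻¹ ∈ Subgroup.closure (cs.simple '' C)) :
    ∀ c ∈ C, Commute (cs.simple a) (cs.simple c) := by
  intro c hc
  have haC : a ∉ C := by simp [hC]
  have hconj : cs.simple a * cs.simple c * cs.simple a ∈ Subgroup.closure (cs.simple '' C) := by
    simpa [cs.inv_simple] using hnormal _ (Subgroup.subset_closure ⟨a, Or.inl rfl, rfl⟩) _
      (Subgroup.subset_closure ⟨c, hc, rfl⟩)
  have hfix := cs.geomRep_apply_apply_of_mem_closure haC hconj (Finsupp.single a 1)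
  rw [cs.geomRep_conj_single_self_apply_self (ne_of_mem_of_not_mem hc haC)] at hfix
  refine cs.commute_simple_of_eq_two (M.eq_two_of_formCoeff_eq_zero ?_)
  simpa using hfix

/-- Let `(W,S)` be a Coxeter system with `m(a,b) = ∞` (encoded by the Coxeter
matrix entry being `0`), and let `C = S − {a,b}`. If the visual subgroup `⟨C⟩`
is normal in `⟨{a} ∪ C⟩`, then `a` commutes with every element of `C`. -/
theorem simple_commutes_of_normal_visual {B : Type*} {W : Type*} [Group W]
    (M : CoxeterMatrix B) (cs : CoxeterSystem M W)
    (a b : B) (hab : a ≠ b) (hinf : M a b = 0)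
    (C : Set B) (hC : C = Set.univ \ {a, b})
    (hnormal : ∀ g ∈ Subgroup.closure (cs.simple '' ({a} ∪ C)),
      ∀ h ∈ Subgroup.closure (cs.simple '' C),
        g * h * g⁻¹ ∈ Subgroup.closure (cs.simple '' C)) :
    ∀ c ∈ C, Commute (cs.simple a) (cs.simple c) :=
  simple_commutes_of_normal_visual_general M cs a b C hC hnormal
end

section
/- Suppose (W,S) is a Coxeter system, I, J ⊆ S, and d is an element of minimal length in the double coset ⟨I⟩w⟨J⟩. Then ⟨I⟩ ∩ d⟨J⟩d⁻¹ = ⟨K⟩ where K = I ∩ dJd⁻¹. -/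
/-!
Let `d` have minimal length in `W_I w W_J`. Then `ℓ (u d) = ℓ u + ℓ d` for `u ∈ W_I` and
`ℓ (d v) = ℓ d + ℓ v` for `v ∈ W_J`. Take `u ∈ W_I` and `v ∈ W_J` with `u d = d v`, and write
`u = s_i u'` with `i ∈ I` and `ℓ u' < ℓ u`. Then `s_i` shortens `d v`, so by the exchange
condition it deletes a letter either from a reduced word of `d`, which minimality forbids, or
from a word of `v` in the letters `J`. Hence `d⁻¹ s_i d ∈ W_J`, additivity of lengths gives it
length one, so it is some `s_j` with `j ∈ J`, and induction on `ℓ u` applies to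
`u' d = d (s_j v)`.

The exchange condition comes from Tits' permutation representation of `W` on `W × ℤ/2`: its
second coordinate counts modulo 2 the occurrences of a reflection `t` in the inversion sequence
of any word for `w`, and this count is odd when `t` is an inversion of `w`.
-/

open List

theorem mul_mul_inv_eq_iff {G : Type*} [Group G] {g t u : G} :
    g * t * g⁻¹ = u ↔ t = g⁻¹ * u * g := by
  constructor <;> rintro rfl <;> group

theorem inv_pow_mul_eq_mul_pow_of_mul_self {G : Type*} [Group G] {a b : G} (ha : a * a = 1)
    (hb : b * b = 1) (k : ℕ) : ((a * b) ^ k)⁻¹ * b = b * (a * b) ^ k := by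
  have hb' : b⁻¹ = b := inv_eq_of_mul_eq_one_right hb
  have hconj : b * (a * b) * b⁻¹ = (a * b)⁻¹ := by
    rw [mul_inv_rev, inv_eq_of_mul_eq_one_right ha, hb', mul_assoc, mul_assoc, hb, mul_one]
  rw [← inv_pow, ← hconj, conj_pow, hb', mul_assoc, hb, mul_one]

namespace CoxeterSystem

variable {B : Type*} {W : Type*} [Group W] {M : CoxeterMatrix B} (cs : CoxeterSystem M W)

local prefix:100 "s " => cs.simple
local prefix:100 "π " => cs.wordProd
local prefix:100 "ℓ " => cs.length
local prefix:100 "ris " => cs.rightInvSeq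
local prefix:100 "lis " => cs.leftInvSeq

theorem simple_mul_mul_simple_eq_iff {i : B} {t u : W} :
    s i * t * s i = u ↔ t = s i * u * s i := by
  constructor <;> rintro rfl <;> simp [mul_assoc, simple_mul_simple_cancel_left]

section TitsRepresentation

open scoped Classical in
noncomputable def titsInvolution (i : B) : Equiv.Perm (W × ZMod 2) :=
  Function.Involutive.toPerm (fun p ↦ (s i * p.1 * s i, p.2 + if p.1 = s i then 1 else 0)) <| by
    rintro ⟨t, ε⟩
    by_cases ht : t = s i
    · subst ht
      simp [add_assoc, CharTwo.add_self_eq_zero]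
    · simp [ht, mul_assoc, simple_mul_simple_cancel_left, mul_eq_one_iff_eq_inv, inv_simple]

open scoped Classical in
theorem titsInvolution_apply (i : B) (t : W) (ε : ZMod 2) :
    cs.titsInvolution i (t, ε) = (s i * t * s i, ε + if t = s i then 1 else 0) := rfl

open scoped Classical in
theorem titsInvolution_mul_pow_apply (i j : B) (k : ℕ) (t : W) (ε : ZMod 2) :
    ((cs.titsInvolution i * cs.titsInvolution j) ^ k) (t, ε) =
      ((s i * s j) ^ k * t * ((s i * s j) ^ k)⁻¹,
        ε + ∑ l ∈ Finset.range (2 * k), if t = s j * (s i * s j) ^ l then 1 else 0) := by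
  induction k with
  | zero => simp
  | succ k ih =>
    set p := s i * s j with hp
    have hpj : (p ^ k)⁻¹ * s j = s j * p ^ k :=
      inv_pow_mul_eq_mul_pow_of_mul_self (cs.simple_mul_simple_self i)
        (cs.simple_mul_simple_self j) k
    have hj : p ^ k * t * (p ^ k)⁻¹ = s j ↔ t = s j * p ^ (2 * k) := by
      rw [mul_mul_inv_eq_iff, hpj, mul_assoc, ← pow_add, two_mul]
    have hi : s j * (p ^ k * t * (p ^ k)⁻¹) * s j = s i ↔ t = s j * p ^ (2 * k + 1) := by
      rw [simple_mul_mul_simple_eq_iff, mul_mul_inv_eq_iff, ← mul_assoc, ← mul_assoc, hpj,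
        show 2 * k + 1 = k + (k + 1) by ring, pow_add, pow_succ', hp]
      simp only [mul_assoc]
    rw [pow_succ', Equiv.Perm.mul_apply, Equiv.Perm.mul_apply, ih, titsInvolution_apply,
      titsInvolution_apply, if_congr hj rfl rfl, if_congr hi rfl rfl,
      show 2 * (k + 1) = 2 * k + 1 + 1 by ring, Finset.sum_range_succ, Finset.sum_range_succ]
    simp only [Prod.mk.injEq, add_assoc, and_true]
    simp [p, pow_succ', mul_inv_rev, inv_simple, mul_assoc]

theorem isLiftable_titsInvolution : M.IsLiftable cs.titsInvolution := by
  classical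
  intro i j
  ext ⟨t, ε⟩ : 1
  have hp : (s i * s j) ^ M i j = 1 := cs.simple_mul_simple_pow i j
  have hperiodic (l : ℕ) : s j * (s i * s j) ^ (M i j + l) = s j * (s i * s j) ^ l := by
    rw [pow_add, hp, one_mul]
  -- the summand has period `M i j`, so the two halves of the sum cancel modulo 2
  rw [titsInvolution_mul_pow_apply, two_mul, Finset.sum_range_add]
  simp [hperiodic, hp, CharTwo.add_self_eq_zero]

noncomputable def titsRep : W →* Equiv.Perm (W × ZMod 2) :=
  cs.lift ⟨cs.titsInvolution, cs.isLiftable_titsInvolution⟩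

open scoped Classical in
theorem titsRep_wordProd_apply (ω : List B) (t : W) (ε : ZMod 2) :
    cs.titsRep (π ω) (t, ε) = (π ω * t * (π ω)⁻¹, ε + (ris ω).count t) := by
  induction ω generalizing t ε with
  | nil => simp
  | cons i ω ih =>
    rw [wordProd_cons, map_mul, Equiv.Perm.mul_apply, ih, titsRep, lift_apply_simple,
      titsInvolution_apply, mul_mul_inv_eq_iff]
    refine Prod.ext (by simp [mul_inv_rev, inv_simple, mul_assoc]) ?_
    simp only [rightInvSeq, count_cons, beq_iff_eq, Nat.cast_add, Nat.cast_ite, Nat.cast_one,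
      Nat.cast_zero, add_assoc, eq_comm (a := t)]

noncomputable def reflectionCocycle (w t : W) : ZMod 2 := (cs.titsRep w (t, 0)).2

theorem titsRep_apply (w t : W) (ε : ZMod 2) :
    cs.titsRep w (t, ε) = (w * t * w⁻¹, ε + cs.reflectionCocycle w t) := by
  obtain ⟨ω, rfl⟩ := cs.wordProd_surjective w
  rw [reflectionCocycle, titsRep_wordProd_apply, titsRep_wordProd_apply, zero_add]

open scoped Classical in
theorem reflectionCocycle_wordProd (ω : List B) (t : W) :
    cs.reflectionCocycle (π ω) t = (ris ω).count t := by
  rw [reflectionCocycle, titsRep_wordProd_apply, zero_add]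

theorem reflectionCocycle_one (t : W) : cs.reflectionCocycle 1 t = 0 := by
  simp [reflectionCocycle]

theorem reflectionCocycle_mul (w₁ w₂ t : W) :
    cs.reflectionCocycle (w₁ * w₂) t =
      cs.reflectionCocycle w₂ t + cs.reflectionCocycle w₁ (w₂ * t * w₂⁻¹) := by
  rw [reflectionCocycle, map_mul, Equiv.Perm.mul_apply, titsRep_apply, titsRep_apply, zero_add]

theorem reflectionCocycle_self {t : W} (ht : cs.IsReflection t) :
    cs.reflectionCocycle t t = 1 := by
  obtain ⟨u, i, rfl⟩ := ht
  have hsimple : cs.reflectionCocycle (s i) (s i) = 1 := by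
    simpa using cs.reflectionCocycle_wordProd [i] (s i)
  have e1 : u⁻¹ * (u * s i * u⁻¹) * u⁻¹⁻¹ = s i := by group
  have e2 : s i * s i * (s i)⁻¹ = s i := by group
  have hcancel := cs.reflectionCocycle_mul u u⁻¹ (u * s i * u⁻¹)
  rw [mul_inv_cancel, reflectionCocycle_one, e1] at hcancel
  rw [reflectionCocycle_mul _ (u * s i) u⁻¹, e1, reflectionCocycle_mul _ u (s i), e2, hsimple]
  linear_combination -hcancel

theorem reflectionCocycle_mul_self {t : W} (ht : cs.IsReflection t) (w : W) :
    cs.reflectionCocycle (w * t) t = 1 + cs.reflectionCocycle w t := by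
  rw [reflectionCocycle_mul, reflectionCocycle_self cs ht, mul_inv_cancel_right]

end TitsRepresentation

section Exchange

theorem mem_rightInvSeq_of_isRightInversion {ω : List B} {t : W}
    (ht : cs.IsRightInversion (π ω) t) : t ∈ ris ω := by
  classical
  by_contra hnot
  obtain ⟨ω', hω', hprod⟩ := cs.exists_isReduced (π ω * t)
  have hodd : ((ris ω').count t : ZMod 2) = 1 := by
    rw [← reflectionCocycle_wordProd, ← hprod, reflectionCocycle_mul_self cs ht.1,
      reflectionCocycle_wordProd, count_eq_zero_of_not_mem hnot, Nat.cast_zero, add_zero]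
  have hmem : t ∈ ris ω' := by
    by_contra h
    simp [count_eq_zero_of_not_mem h] at hodd
  have hlt := (cs.isRightInversion_of_mem_rightInvSeq hω' hmem).2
  rw [← hprod, mul_assoc, ht.1.mul_self, mul_one] at hlt
  exact lt_asymm ht.2 hlt

theorem mem_leftInvSeq_of_isLeftInversion {ω : List B} {t : W}
    (ht : cs.IsLeftInversion (π ω) t) : t ∈ lis ω := by
  have h := cs.mem_rightInvSeq_of_isRightInversion (ω := ω.reverse)
    (by rwa [wordProd_reverse, isRightInversion_inv_iff])
  rwa [rightInvSeq_reverse, mem_reverse] at h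

theorem exists_eraseIdx_of_isLeftInversion {ω : List B} {t : W}
    (ht : cs.IsLeftInversion (π ω) t) : ∃ j < ω.length, t * π ω = π (ω.eraseIdx j) := by
  obtain ⟨j, hj, rfl⟩ := mem_iff_getElem.mp (cs.mem_leftInvSeq_of_isLeftInversion ht)
  rw [length_leftInvSeq] at hj
  exact ⟨j, hj, by rw [← getD_eq_getElem _ 1, getD_leftInvSeq_mul_wordProd]⟩

theorem length_wordProd_eraseIdx_lt {ω : List B} (hω : cs.IsReduced ω) {j : ℕ}
    (hj : j < ω.length) : ℓ (π (ω.eraseIdx j)) < ℓ (π ω) := by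
  have := length_eraseIdx_add_one hj
  have := cs.length_wordProd_le (ω.eraseIdx j)
  rw [hω.eq]
  omega

theorem isLeftInversion_or_exists_eraseIdx_of_isLeftInversion_mul {x t : W} {ω : List B}
    (ht : cs.IsLeftInversion (x * π ω) t) :
    cs.IsLeftInversion x t ∨ ∃ j < ω.length, t * (x * π ω) = x * π (ω.eraseIdx j) := by
  obtain ⟨δ, hδ, rfl⟩ := cs.exists_isReduced x
  rw [← wordProd_append] at ht
  obtain ⟨j, hj, hex⟩ := cs.exists_eraseIdx_of_isLeftInversion ht
  rw [wordProd_append] at hex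
  rcases lt_or_ge j δ.length with hjδ | hjδ
  · rw [eraseIdx_append_of_lt_length hjδ, wordProd_append, ← mul_assoc] at hex
    refine .inl ⟨ht.1, ?_⟩
    rw [mul_right_cancel hex]
    exact cs.length_wordProd_eraseIdx_lt hδ hjδ
  · rw [eraseIdx_append_of_length_le hjδ, wordProd_append] at hex
    rw [length_append] at hj
    exact .inr ⟨j - δ.length, by omega, hex⟩

end Exchange

section Parabolic

def parabolicSubgroup (I : Set B) : Subgroup W := Subgroup.closure (cs.simple '' I)

variable {I : Set B}

theorem simple_mem_parabolicSubgroup {i : B} (hi : i ∈ I) : s i ∈ cs.parabolicSubgroup I :=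
  Subgroup.subset_closure (Set.mem_image_of_mem _ hi)

theorem wordProd_mem_parabolicSubgroup {ω : List B} (hω : ∀ i ∈ ω, i ∈ I) :
    π ω ∈ cs.parabolicSubgroup I := by
  refine Subgroup.list_prod_mem _ fun x hx ↦ ?_
  obtain ⟨i, hi, rfl⟩ := mem_map.mp hx
  exact cs.simple_mem_parabolicSubgroup (hω i hi)

theorem exists_word_of_mem_parabolicSubgroup {u : W} (hu : u ∈ cs.parabolicSubgroup I) :
    ∃ ω : List B, (∀ i ∈ ω, i ∈ I) ∧ u = π ω := by
  induction hu using Subgroup.closure_induction with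
  | mem x hx =>
    obtain ⟨i, hi, rfl⟩ := hx
    exact ⟨[i], by simpa using hi, by simp⟩
  | one => exact ⟨[], by simp, by simp⟩
  | mul x y _ _ ihx ihy =>
    obtain ⟨ω₁, h₁, rfl⟩ := ihx
    obtain ⟨ω₂, h₂, rfl⟩ := ihy
    exact ⟨ω₁ ++ ω₂, by simpa using fun i hi ↦ hi.elim (h₁ i) (h₂ i),
      (cs.wordProd_append ω₁ ω₂).symm⟩
  | inv x _ ihx =>
    obtain ⟨ω, h, rfl⟩ := ihx
    exact ⟨ω.reverse, by simpa using h, (cs.wordProd_reverse ω).symm⟩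

theorem exists_isReduced_sublist (ω : List B) :
    ∃ ω', ω' <+ ω ∧ cs.IsReduced ω' ∧ π ω' = π ω := by
  induction ω with
  | nil => exact ⟨[], .slnil, by simp [IsReduced], rfl⟩
  | cons i ω ih =>
    obtain ⟨ω', hsub, hred, hprod⟩ := ih
    by_cases hdesc : cs.IsLeftDescent (π ω') i
    · obtain ⟨j, hj, hex⟩ := cs.exists_eraseIdx_of_isLeftInversion
        ((cs.isLeftInversion_simple_iff_isLeftDescent _ _).mpr hdesc)
      refine ⟨ω'.eraseIdx j, (eraseIdx_sublist _ _).trans (hsub.cons i), ?_,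
        by rw [← hex, wordProd_cons, hprod]⟩
      have := cs.isLeftDescent_iff.mp hdesc
      have := length_eraseIdx_add_one hj
      rw [IsReduced, ← hex]
      rw [IsReduced] at hred
      omega
    · refine ⟨i :: ω', hsub.cons_cons i, ?_, by rw [wordProd_cons, wordProd_cons, hprod]⟩
      rw [IsReduced, wordProd_cons, length_cons, cs.not_isLeftDescent_iff.mp hdesc, hred]

theorem exists_isReduced_of_mem_parabolicSubgroup {u : W} (hu : u ∈ cs.parabolicSubgroup I) :
    ∃ ω : List B, cs.IsReduced ω ∧ (∀ i ∈ ω, i ∈ I) ∧ u = π ω := by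
  obtain ⟨ω, hω, rfl⟩ := cs.exists_word_of_mem_parabolicSubgroup hu
  obtain ⟨ω', hsub, hred, hprod⟩ := cs.exists_isReduced_sublist ω
  exact ⟨ω', hred, fun i hi ↦ hω i (hsub.subset hi), hprod.symm⟩

theorem exists_leftDescent_of_mem_parabolicSubgroup {u : W} (hu : u ∈ cs.parabolicSubgroup I)
    (hne : u ≠ 1) : ∃ i ∈ I, cs.IsLeftDescent u i := by
  obtain ⟨_ | ⟨i, ω⟩, hred, hI, rfl⟩ := cs.exists_isReduced_of_mem_parabolicSubgroup hu
  · exact absurd cs.wordProd_nil hne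
  · refine ⟨i, hI i mem_cons_self, ?_⟩
    rw [IsLeftDescent, hred.eq, wordProd_cons, simple_mul_simple_cancel_left]
    exact (cs.length_wordProd_le ω).trans_lt (by simp)

theorem parabolicSubgroup_induction_left {p : (u : W) → u ∈ cs.parabolicSubgroup I → Prop}
    (one : p 1 (one_mem _))
    (mul_simple_left : ∀ u hu i (hi : i ∈ I), ℓ (s i * u) = ℓ u + 1 → p u hu →
      p (s i * u) (mul_mem (cs.simple_mem_parabolicSubgroup hi) hu))
    {u : W} (hu : u ∈ cs.parabolicSubgroup I) : p u hu := by
  induction hlen : ℓ u using Nat.strong_induction_on generalizing u with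
  | _ n ih =>
    obtain rfl | hne := eq_or_ne u 1
    · exact one
    obtain ⟨i, hi, hdesc⟩ := cs.exists_leftDescent_of_mem_parabolicSubgroup hu hne
    obtain ⟨u, rfl⟩ : ∃ u', u = s i * u' := ⟨s i * u, (cs.simple_mul_simple_cancel_left i).symm⟩
    have hu' : u ∈ cs.parabolicSubgroup I := by
      simpa [simple_mul_simple_cancel_left] using
        mul_mem (cs.simple_mem_parabolicSubgroup hi) hu
    rw [IsLeftDescent, simple_mul_simple_cancel_left] at hdesc
    have := cs.length_simple_mul u i
    exact mul_simple_left u hu' i hi (by omega) (ih _ (by omega) hu' rfl)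

theorem eq_simple_of_mem_parabolicSubgroup_of_length_eq_one {u : W}
    (hu : u ∈ cs.parabolicSubgroup I) (hlen : ℓ u = 1) : ∃ i ∈ I, u = s i := by
  have hne : u ≠ 1 := by rintro rfl; simp at hlen
  obtain ⟨i, hi, hdesc⟩ := cs.exists_leftDescent_of_mem_parabolicSubgroup hu hne
  have : s i * u = 1 := cs.length_eq_zero_iff.mp (by rw [IsLeftDescent] at hdesc; omega)
  exact ⟨i, hi, by rw [eq_inv_of_mul_eq_one_right this, inv_simple]⟩

end Parabolic

section MinimalRepresentative

variable {I J : Set B} {d : W}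

theorem length_mul_eq_add_left (hmin : ∀ u ∈ cs.parabolicSubgroup I, ℓ d ≤ ℓ (u * d)) {u : W}
    (hu : u ∈ cs.parabolicSubgroup I) : ℓ (u * d) = ℓ u + ℓ d := by
  induction hu using cs.parabolicSubgroup_induction_left with
  | one => simp
  | mul_simple_left u hu i hi hlen ih =>
    suffices ¬cs.IsLeftDescent (u * d) i by
      rw [mul_assoc, cs.not_isLeftDescent_iff.mp this, ih, hlen]
      ring
    intro hdesc
    obtain ⟨δ, hδ, rfl⟩ := cs.exists_isReduced d
    rcases cs.isLeftInversion_or_exists_eraseIdx_of_isLeftInversion_mul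
      ((cs.isLeftInversion_simple_iff_isLeftDescent _ _).mpr hdesc) with h | ⟨j, hj, hex⟩
    · rw [isLeftInversion_simple_iff_isLeftDescent, IsLeftDescent] at h
      omega
    · have hshorter :=
        hmin _ (mul_mem (mul_mem (inv_mem hu) (cs.simple_mem_parabolicSubgroup hi)) hu)
      rw [show u⁻¹ * s i * u * π δ = u⁻¹ * (s i * (u * π δ)) by group, hex,
        inv_mul_cancel_left] at hshorter
      exact (cs.length_wordProd_eraseIdx_lt hδ hj).not_ge hshorter

theorem length_mul_eq_add_right (hmin : ∀ v ∈ cs.parabolicSubgroup J, ℓ d ≤ ℓ (d * v)) {v : W}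
    (hv : v ∈ cs.parabolicSubgroup J) : ℓ (d * v) = ℓ d + ℓ v := by
  have hmin' : ∀ u ∈ cs.parabolicSubgroup J, ℓ d⁻¹ ≤ ℓ (u * d⁻¹) := fun u hu ↦ by
    rw [length_inv, ← length_inv _ (u * d⁻¹), mul_inv_rev, inv_inv]
    exact hmin _ (inv_mem hu)
  have h := cs.length_mul_eq_add_left hmin' (inv_mem hv)
  rwa [← mul_inv_rev, length_inv, length_inv, length_inv, add_comm] at h

theorem exists_conj_simple_eq_simple
    (hI : ∀ u ∈ cs.parabolicSubgroup I, ℓ d ≤ ℓ (u * d))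
    (hJ : ∀ v ∈ cs.parabolicSubgroup J, ℓ d ≤ ℓ (d * v)) {u v : W} {i : B} (hi : i ∈ I)
    (hu : u ∈ cs.parabolicSubgroup I) (hlen : ℓ (s i * u) = ℓ u + 1)
    (hv : v ∈ cs.parabolicSubgroup J) (huv : s i * u * d = d * v) :
    ∃ k ∈ J, d⁻¹ * s i * d = s k := by
  have hsi := cs.simple_mem_parabolicSubgroup hi
  obtain ⟨ω, hω, rfl⟩ := cs.exists_word_of_mem_parabolicSubgroup hv
  have hinv : cs.IsLeftInversion (d * π ω) (s i) := by
    rw [isLeftInversion_simple_iff_isLeftDescent, IsLeftDescent, ← huv, mul_assoc (s i),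
      simple_mul_simple_cancel_left, ← mul_assoc, cs.length_mul_eq_add_left hI (mul_mem hsi hu),
      cs.length_mul_eq_add_left hI hu, hlen]
    omega
  rcases cs.isLeftInversion_or_exists_eraseIdx_of_isLeftInversion_mul hinv with h | ⟨j, -, hex⟩
  · exact absurd (hI _ hsi) (not_le.mpr h.2)
  have hr : d⁻¹ * s i * d ∈ cs.parabolicSubgroup J := by
    rw [show d⁻¹ * s i * d = d⁻¹ * (s i * (d * π ω)) * (π ω)⁻¹ by group, hex,
      inv_mul_cancel_left]
    exact mul_mem (cs.wordProd_mem_parabolicSubgroup fun k hk ↦ hω k (mem_of_mem_eraseIdx hk))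
      (inv_mem hv)
  have hr_len : ℓ (d⁻¹ * s i * d) = 1 := by
    have h := cs.length_mul_eq_add_right hJ hr
    rw [show d * (d⁻¹ * s i * d) = s i * d by group, cs.length_mul_eq_add_left hI hsi,
      length_simple] at h
    omega
  exact cs.eq_simple_of_mem_parabolicSubgroup_of_length_eq_one hr hr_len

theorem mem_closure_inter_conj_of_mul_eq_mul
    (hI : ∀ u ∈ cs.parabolicSubgroup I, ℓ d ≤ ℓ (u * d))
    (hJ : ∀ v ∈ cs.parabolicSubgroup J, ℓ d ≤ ℓ (d * v)) {u : W}
    (hu : u ∈ cs.parabolicSubgroup I) : ∀ v ∈ cs.parabolicSubgroup J, u * d = d * v →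
      u ∈ Subgroup.closure (cs.simple '' I ∩ (fun x ↦ d * x * d⁻¹) '' (cs.simple '' J)) := by
  induction hu using cs.parabolicSubgroup_induction_left with
  | one => exact fun _ _ _ ↦ one_mem _
  | mul_simple_left u hu i hi hlen ih =>
    intro v hv huv
    obtain ⟨k, hk, hconj⟩ := cs.exists_conj_simple_eq_simple hI hJ hi hu hlen hv huv
    have hK : s i ∈ cs.simple '' I ∩ (fun x ↦ d * x * d⁻¹) '' (cs.simple '' J) :=
      ⟨⟨i, hi, rfl⟩, s k, ⟨k, hk, rfl⟩, by rw [← hconj]; group⟩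
    refine mul_mem (Subgroup.subset_closure hK)
      (ih _ (mul_mem (cs.simple_mem_parabolicSubgroup hk) hv) ?_)
    rw [← hconj, show d * (d⁻¹ * s i * d * v) = s i * (d * v) by group, ← huv, mul_assoc,
      simple_mul_simple_cancel_left]

end MinimalRepresentative

end CoxeterSystem

/-- Kilmoyer's theorem: if `d` has minimal length in the double coset
`⟨I⟩w⟨J⟩` of a Coxeter system, then `⟨I⟩ ∩ d⟨J⟩d⁻¹ = ⟨K⟩` where
`K = I ∩ dJd⁻¹`. -/
theorem kilmoyer_double_coset {B : Type*} {W : Type*} [Group W]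
    (M : CoxeterMatrix B) (cs : CoxeterSystem M W) (I J : Set B) (w d : W)
    (hd : ∃ i ∈ Subgroup.closure (cs.simple '' I),
      ∃ j ∈ Subgroup.closure (cs.simple '' J), d = i * w * j)
    (hmin : ∀ x : W, (∃ i ∈ Subgroup.closure (cs.simple '' I),
      ∃ j ∈ Subgroup.closure (cs.simple '' J), x = i * w * j) →
        cs.length d ≤ cs.length x) :
    Subgroup.closure (cs.simple '' I) ⊓
      Subgroup.map (MulAut.conj d).toMonoidHom (Subgroup.closure (cs.simple '' J)) =
    Subgroup.closure ((cs.simple '' I) ∩ ((fun x => d * x * d⁻¹) '' (cs.simple '' J))) := by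
  obtain ⟨a, ha, b, hb, hdab⟩ := hd
  have hI : ∀ u ∈ cs.parabolicSubgroup I, cs.length d ≤ cs.length (u * d) := fun u hu ↦
    hmin _ ⟨u * a, mul_mem hu ha, b, hb, by rw [hdab]; group⟩
  have hJ : ∀ v ∈ cs.parabolicSubgroup J, cs.length d ≤ cs.length (d * v) := fun v hv ↦
    hmin _ ⟨a, ha, b * v, mul_mem hb hv, by rw [hdab]; group⟩
  refine le_antisymm ?_ ((Subgroup.closure_le _).mpr ?_)
  · rintro _ ⟨hu, v, hv, rfl⟩
    exact cs.mem_closure_inter_conj_of_mul_eq_mul hI hJ hu v hv (by simp)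
  · rintro _ ⟨hx, y, hy, rfl⟩
    exact ⟨Subgroup.subset_closure hx, y, Subgroup.subset_closure hy, rfl⟩
end

section
/- Let (W,S) be a Coxeter system and suppose W = ⟨F⟩ × ⟨G⟩ = ⟨H⟩ × ⟨I⟩ as internal direct products of visual subgroups, where F ∪ G = S = H ∪ I. Then W = ⟨F⟩ × ⟨H − F⟩ × ⟨G ∩ I⟩. -/
open Subgroup

/-!
Since `F, G` partition `S` and `H ∪ I = S`, we have `G = (H \ F) ∪ (G ∩ I)`, so
`⟨G⟩ = ⟨H \ F⟩ ⊔ ⟨G ∩ I⟩`. These two factors commute elementwise (`H \ F ⊆ H`, `G ∩ I ⊆ I`), so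
every element of `⟨G⟩` is a product `y z` with `y ∈ ⟨H \ F⟩`, `z ∈ ⟨G ∩ I⟩`, and this
factorisation is unique because it is one in `⟨H⟩ × ⟨I⟩`. Composing with `W = ⟨F⟩ × ⟨G⟩` gives
the triple product; no Coxeter theory is needed.
-/

theorem Set.eq_diff_union_inter_of_union_eq_univ {α : Type*} {F G H I : Set α}
    (hFG : F ∪ G = univ) (hFGd : Disjoint F G) (hHI : H ∪ I = univ) :
    G = H \ F ∪ G ∩ I := by
  ext x
  have hx₁ : x ∈ F ∪ G := hFG ▸ mem_univ x
  have hx₂ : x ∈ H ∪ I := hHI ▸ mem_univ x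
  have hx₃ : ¬(x ∈ F ∧ x ∈ G) := fun h => disjoint_left.mp hFGd h.1 h.2
  simp only [mem_union, mem_sdiff, mem_inter_iff] at hx₁ hx₂ ⊢
  tauto

namespace Subgroup

open scoped Pointwise

variable {W : Type*} [Group W]

theorem closure_le_centralizer_closure {S T : Set W} (h : ∀ x ∈ S, ∀ y ∈ T, Commute x y) :
    closure S ≤ centralizer (closure T) := by
  rw [centralizer_closure, closure_le]
  exact fun x hx y hy => (h x hx y hy).symm.eq

theorem coe_sup_of_le_centralizer {B C : Subgroup W} (hBC : B ≤ centralizer C) :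
    ((B ⊔ C : Subgroup W) : Set W) = B * C :=
  coe_mul_of_left_le_normalizer_right B C (hBC.trans (centralizer_le_normalizer _))

theorem injective_mul_of_le {H I B C : Subgroup W}
    (hHI : Function.Injective fun p : H × I => (p.1 : W) * p.2) (hB : B ≤ H) (hC : C ≤ I) :
    Function.Injective fun p : B × C => (p.1 : W) * p.2 := by
  intro p q hpq
  have := @hHI (⟨p.1, hB p.1.2⟩, ⟨p.2, hC p.2.2⟩) (⟨q.1, hB q.1.2⟩, ⟨q.2, hC q.2.2⟩) hpq
  simp only [Prod.ext_iff, Subtype.ext_iff] at this ⊢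
  exact this

theorem bijective_mul_sup_of_le_centralizer {B C : Subgroup W} (hBC : B ≤ centralizer C)
    (hinj : Function.Injective fun p : B × C => (p.1 : W) * p.2) :
    Function.Bijective fun p : B × C =>
      (⟨p.1 * p.2, mul_mem (mem_sup_left p.1.2) (mem_sup_right p.2.2)⟩ : ↥(B ⊔ C)) := by
  refine ⟨fun p q hpq => hinj (congrArg Subtype.val hpq), fun k => ?_⟩
  obtain ⟨b, hb, c, hc, hk⟩ : (k : W) ∈ (B : Set W) * C := coe_sup_of_le_centralizer hBC ▸ k.2
  exact ⟨(⟨b, hb⟩, ⟨c, hc⟩), Subtype.ext hk⟩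

theorem IsComplement'.bijective_mul_mul {A B C : Subgroup W} (hA : IsComplement' A (B ⊔ C))
    (hBC : B ≤ centralizer C) (hinj : Function.Injective fun p : B × C => (p.1 : W) * p.2) :
    Function.Bijective fun t : A × B × C => (t.1 : W) * t.2.1 * t.2.2 := by
  have := ((isComplement_iff_bijective A (B ⊔ C)).1 hA).comp
    (Function.bijective_id.prodMap (bijective_mul_sup_of_le_centralizer hBC hinj))
  convert this using 1
  funext t
  exact mul_assoc _ _ _

end Subgroup

theorem visual_direct_product_refine_general {B : Type*} {W : Type*} [Group W]
    (M : CoxeterMatrix B) (cs : CoxeterSystem M W) (F G H I : Set B)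
    (hFG : F ∪ G = Set.univ) (hFGd : Disjoint F G)
    (hHI : H ∪ I = Set.univ)
    (hcFG : ∀ f ∈ F, ∀ g ∈ G, Commute (cs.simple f) (cs.simple g))
    (hcHI : ∀ h ∈ H, ∀ i ∈ I, Commute (cs.simple h) (cs.simple i))
    (hbFG : Function.Bijective (fun p :
        closure (cs.simple '' F) × closure (cs.simple '' G) =>
        (p.1 : W) * (p.2 : W)))
    (hbHI : Function.Bijective (fun p :
        closure (cs.simple '' H) × closure (cs.simple '' I) =>
        (p.1 : W) * (p.2 : W))) :
    (∀ s ∈ F, ∀ t ∈ H \ F, Commute (cs.simple s) (cs.simple t)) ∧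
    (∀ s ∈ F, ∀ t ∈ G ∩ I, Commute (cs.simple s) (cs.simple t)) ∧
    (∀ s ∈ H \ F, ∀ t ∈ G ∩ I, Commute (cs.simple s) (cs.simple t)) ∧
    Function.Bijective (fun t :
        closure (cs.simple '' F) × closure (cs.simple '' (H \ F)) ×
          closure (cs.simple '' (G ∩ I)) =>
        (t.1 : W) * (t.2.1 : W) * (t.2.2 : W)) := by
  have hG := Set.eq_diff_union_inter_of_union_eq_univ hFG hFGd hHI
  have hcomm : ∀ s ∈ H \ F, ∀ t ∈ G ∩ I, Commute (cs.simple s) (cs.simple t) :=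
    fun s hs t ht => hcHI s hs.1 t ht.2
  refine ⟨fun s hs t ht => hcFG s hs t (hG ▸ Or.inl ht), fun s hs t ht => hcFG s hs t ht.1,
    hcomm, ?_⟩
  have hsup : closure (cs.simple '' (H \ F)) ⊔ closure (cs.simple '' (G ∩ I)) =
      closure (cs.simple '' G) := by
    rw [← Subgroup.closure_union, ← Set.image_union, ← hG]
  refine IsComplement'.bijective_mul_mul (hsup ▸ hbFG) ?_ ?_
  · refine closure_le_centralizer_closure ?_
    rintro _ ⟨s, hs, rfl⟩ _ ⟨t, ht, rfl⟩
    exact hcomm s hs t ht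
  · exact injective_mul_of_le hbHI.1 (closure_mono (Set.image_mono Set.sdiff_subset))
      (closure_mono (Set.image_mono Set.inter_subset_right))

/-- If `W = ⟨F⟩ × ⟨G⟩ = ⟨H⟩ × ⟨I⟩` as internal direct products of visual
subgroups of a Coxeter system, with `F ∪ G = S = H ∪ I`, then
`W = ⟨F⟩ × ⟨H − F⟩ × ⟨G ∩ I⟩` as an internal direct product. -/
theorem visual_direct_product_refine {B : Type*} {W : Type*} [Group W]
    (M : CoxeterMatrix B) (cs : CoxeterSystem M W) (F G H I : Set B)
    (hFG : F ∪ G = Set.univ) (hFGd : Disjoint F G)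
    (hHI : H ∪ I = Set.univ) (hHId : Disjoint H I)
    (hcFG : ∀ f ∈ F, ∀ g ∈ G, Commute (cs.simple f) (cs.simple g))
    (hcHI : ∀ h ∈ H, ∀ i ∈ I, Commute (cs.simple h) (cs.simple i))
    (hbFG : Function.Bijective (fun p :
        closure (cs.simple '' F) × closure (cs.simple '' G) =>
        (p.1 : W) * (p.2 : W)))
    (hbHI : Function.Bijective (fun p :
        closure (cs.simple '' H) × closure (cs.simple '' I) =>
        (p.1 : W) * (p.2 : W))) :
    (∀ s ∈ F, ∀ t ∈ H \ F, Commute (cs.simple s) (cs.simple t)) ∧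
    (∀ s ∈ F, ∀ t ∈ G ∩ I, Commute (cs.simple s) (cs.simple t)) ∧
    (∀ s ∈ H \ F, ∀ t ∈ G ∩ I, Commute (cs.simple s) (cs.simple t)) ∧
    Function.Bijective (fun t :
        closure (cs.simple '' F) × closure (cs.simple '' (H \ F)) ×
          closure (cs.simple '' (G ∩ I)) =>
        (t.1 : W) * (t.2.1 : W) * (t.2.2 : W)) :=
  visual_direct_product_refine_general M cs F G H I hFG hFGd hHI hcFG hcHI hbFG hbHI
end

section
/- Let (W,S) be a Coxeter system with presentation diagram Γ. Suppose Γ = Γ₁ ∪ Γ₂ as a union of induced subgraphs with Γ₀ = Γ₁ ∩ Γ₂, where S_i denotes the vertex set of Γ_i. Then W is the amalgamated free product ⟨S₁⟩ *_{⟨S₀⟩} ⟨S₂⟩, i.e., W is the pushout of the inclusions ⟨S₀⟩ → ⟨S₁⟩ and ⟨S₀⟩ → ⟨S₂⟩. -/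
open Subgroup

/-- If the presentation diagram of a Coxeter system `(W,S)` is the union of two
induced subgraphs on `S₁` and `S₂` with intersection on `S₀ = S₁ ∩ S₂`
(equivalently, `m(s,t) = ∞` for `s ∈ S₁ − S₀`, `t ∈ S₂ − S₀`; `∞` is encoded
as the matrix entry `0`), then `W` is the amalgamated free product
`⟨S₁⟩ *_{⟨S₀⟩} ⟨S₂⟩`, i.e. `W` satisfies the universal property of the pushout
of the inclusions `⟨S₀⟩ → ⟨S₁⟩` and `⟨S₀⟩ → ⟨S₂⟩`. -/
theorem visual_splitting_is_pushout {B : Type*} {W : Type*} [Group W]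
    (M : CoxeterMatrix B) (cs : CoxeterSystem M W) (S₀ S₁ S₂ : Set B)
    (hcover : S₁ ∪ S₂ = Set.univ) (hint : S₀ = S₁ ∩ S₂)
    (hsep : ∀ s ∈ S₁ \ S₀, ∀ t ∈ S₂ \ S₀, M s t = 0)
    (h01 : closure (cs.simple '' S₀) ≤ closure (cs.simple '' S₁))
    (h02 : closure (cs.simple '' S₀) ≤ closure (cs.simple '' S₂)) :
    ∀ (H : Type*) [Group H]
      (f₁ : closure (cs.simple '' S₁) →* H) (f₂ : closure (cs.simple '' S₂) →* H),
      (∀ (x : W) (hx : x ∈ closure (cs.simple '' S₀)),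
        f₁ ⟨x, h01 hx⟩ = f₂ ⟨x, h02 hx⟩) →
      ∃! f : W →* H,
        (∀ (x : W) (hx : x ∈ closure (cs.simple '' S₁)), f x = f₁ ⟨x, hx⟩) ∧
        (∀ (x : W) (hx : x ∈ closure (cs.simple '' S₂)), f x = f₂ ⟨x, hx⟩) := by
  intro H _ f₁ f₂ hcomp
  classical
  have hmem1 : ∀ i ∈ S₁, cs.simple i ∈ closure (cs.simple '' S₁) :=
    fun i hi => subset_closure ⟨i, hi, rfl⟩
  have hmem2 : ∀ i ∈ S₂, cs.simple i ∈ closure (cs.simple '' S₂) :=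
    fun i hi => subset_closure ⟨i, hi, rfl⟩
  have hall : ∀ i : B, i ∈ S₁ ∨ i ∈ S₂ := by
    intro i
    have : i ∈ S₁ ∪ S₂ := hcover ▸ Set.mem_univ i
    exact this
  set g : B → H := fun i =>
    if h : i ∈ S₁ then f₁ ⟨cs.simple i, hmem1 i h⟩
    else f₂ ⟨cs.simple i, hmem2 i ((hall i).resolve_left h)⟩ with hg
  have hg1 : ∀ i (h : i ∈ S₁), g i = f₁ ⟨cs.simple i, hmem1 i h⟩ := by
    intro i h; simp [hg, h]
  have hg2 : ∀ i (h : i ∈ S₂), g i = f₂ ⟨cs.simple i, hmem2 i h⟩ := by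
    intro i h
    by_cases h1 : i ∈ S₁
    · have h0 : i ∈ S₀ := hint ▸ ⟨h1, h⟩
      have hx0 : cs.simple i ∈ closure (cs.simple '' S₀) := subset_closure ⟨i, h0, rfl⟩
      have := hcomp (cs.simple i) hx0
      simp only [hg, dif_pos h1]
      exact this
    · simp [hg, h1]
  -- liftability
  have key1 : ∀ i i', i ∈ S₁ → i' ∈ S₁ → (g i * g i') ^ M i i' = 1 := by
    intro i i' hi hi'
    rw [hg1 i hi, hg1 i' hi', ← map_mul, ← map_pow]
    have : ((⟨cs.simple i, hmem1 i hi⟩ * ⟨cs.simple i', hmem1 i' hi'⟩ :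
        closure (cs.simple '' S₁)) ^ M i i') = 1 := by
      ext
      push_cast
      exact cs.simple_mul_simple_pow i i'
    rw [this, map_one]
  have key2 : ∀ i i', i ∈ S₂ → i' ∈ S₂ → (g i * g i') ^ M i i' = 1 := by
    intro i i' hi hi'
    rw [hg2 i hi, hg2 i' hi', ← map_mul, ← map_pow]
    have : ((⟨cs.simple i, hmem2 i hi⟩ * ⟨cs.simple i', hmem2 i' hi'⟩ :
        closure (cs.simple '' S₂)) ^ M i i') = 1 := by
      ext
      push_cast
      exact cs.simple_mul_simple_pow i i'
    rw [this, map_one]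
  have hlift : M.IsLiftable g := by
    intro i i'
    rcases hall i with hi | hi <;> rcases hall i' with hi' | hi'
    · exact key1 i i' hi hi'
    · by_cases h1 : i' ∈ S₁
      · exact key1 i i' hi h1
      by_cases h2 : i ∈ S₂
      · exact key2 i i' h2 hi'
      have : M i i' = 0 := by
        refine hsep i ⟨hi, ?_⟩ i' ⟨hi', ?_⟩
        · rw [hint]; exact fun h => h2 h.2
        · rw [hint]; exact fun h => h1 h.1
      rw [this, pow_zero]
    · by_cases h1 : i ∈ S₁
      · exact key1 i i' h1 hi'
      by_cases h2 : i' ∈ S₂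
      · exact key2 i i' hi h2
      have : M i' i = 0 := by
        refine hsep i' ⟨hi', ?_⟩ i ⟨hi, ?_⟩
        · rw [hint]; exact fun h => h2 h.2
        · rw [hint]; exact fun h => h1 h.1
      rw [M.symmetric, this, pow_zero]
    · exact key2 i i' hi hi'
  set f : W →* H := cs.lift ⟨g, hlift⟩ with hf
  have hfs : ∀ i, f (cs.simple i) = g i := fun i => cs.lift_apply_simple hlift i
  have prop1 : ∀ (x : W) (hx : x ∈ closure (cs.simple '' S₁)), f x = f₁ ⟨x, hx⟩ := by
    intro x hx
    induction hx using closure_induction with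
    | mem x hx =>
      obtain ⟨i, hi, rfl⟩ := hx
      rw [hfs i, hg1 i hi]
    | one => exact (map_one f).trans (map_one _).symm
    | mul x y hx hy px py =>
      have : (⟨x * y, mul_mem hx hy⟩ : closure (cs.simple '' S₁)) = ⟨x, hx⟩ * ⟨y, hy⟩ := rfl
      rw [map_mul, px, py, this, map_mul]
    | inv x hx px =>
      have : (⟨x⁻¹, inv_mem hx⟩ : closure (cs.simple '' S₁)) = (⟨x, hx⟩)⁻¹ := rfl
      rw [map_inv, px, this, map_inv]
  have prop2 : ∀ (x : W) (hx : x ∈ closure (cs.simple '' S₂)), f x = f₂ ⟨x, hx⟩ := by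
    intro x hx
    induction hx using closure_induction with
    | mem x hx =>
      obtain ⟨i, hi, rfl⟩ := hx
      rw [hfs i, hg2 i hi]
    | one => exact (map_one f).trans (map_one _).symm
    | mul x y hx hy px py =>
      have : (⟨x * y, mul_mem hx hy⟩ : closure (cs.simple '' S₂)) = ⟨x, hx⟩ * ⟨y, hy⟩ := rfl
      rw [map_mul, px, py, this, map_mul]
    | inv x hx px =>
      have : (⟨x⁻¹, inv_mem hx⟩ : closure (cs.simple '' S₂)) = (⟨x, hx⟩)⁻¹ := rfl
      rw [map_inv, px, this, map_inv]
  refine ⟨f, ⟨prop1, prop2⟩, ?_⟩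
  rintro f' ⟨hp1, hp2⟩
  apply cs.ext_simple
  intro i
  rcases hall i with hi | hi
  · rw [hp1 _ (hmem1 i hi), prop1 _ (hmem1 i hi)]
  · rw [hp2 _ (hmem2 i hi), prop2 _ (hmem2 i hi)]
end

section
/- Let G be a group acting on a tree T, and let A ≤ B ≤ G be subgroups with A of finite index in B. If A stabilizes a vertex of T, then B stabilizes a vertex of T. -/
open SimpleGraph

section TreeFixAux

variable {V : Type*} {T : SimpleGraph V}

private lemma getVert_mem_support' {u v : V} (p : T.Walk u v) (i : ℕ) :
    p.getVert i ∈ p.support := by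
  induction p generalizing i with
  | nil => simp [SimpleGraph.Walk.getVert]
  | cons h q ih =>
    cases i with
    | zero => simp
    | succ n =>
      rw [SimpleGraph.Walk.getVert_cons_succ]
      simp [ih n]

private lemma getVert_inj' {u v : V} (p : T.Walk u v) :
    p.IsPath → ∀ i j, i ≤ p.length → j ≤ p.length →
      p.getVert i = p.getVert j → i = j := by
  induction p with
  | nil => intro _ i j hi hj _; simp [SimpleGraph.Walk.length_nil] at hi hj; omega
  | cons h q ih =>
    intro hp i j hi hj hij
    rw [SimpleGraph.Walk.cons_isPath_iff] at hp
    match i, j with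
    | 0, 0 => rfl
    | 0, (j+1) =>
      exfalso
      apply hp.2
      rw [SimpleGraph.Walk.getVert_zero, SimpleGraph.Walk.getVert_cons_succ] at hij
      rw [hij]; exact getVert_mem_support' q j
    | (i+1), 0 =>
      exfalso
      apply hp.2
      rw [SimpleGraph.Walk.getVert_zero, SimpleGraph.Walk.getVert_cons_succ] at hij
      rw [← hij]; exact getVert_mem_support' q i
    | (i+1), (j+1) =>
      have := ih hp.1 i j (by simpa using hi) (by simpa using hj)
        (by rwa [SimpleGraph.Walk.getVert_cons_succ, SimpleGraph.Walk.getVert_cons_succ] at hij)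
      omega

/-- In a tree, distances to a fixed vertex from two adjacent vertices differ by exactly one. -/
private lemma dist_adj_step (hT : T.IsTree) {x y : V} (s : V) (h : T.Adj x y) :
    T.dist y s = T.dist x s + 1 ∨ T.dist x s = T.dist y s + 1 := by
  classical
  obtain ⟨P, hP, hPl⟩ := hT.isConnected.exists_path_of_dist x s
  by_cases hy : y ∈ P.support
  · right
    have h1 : (P.takeUntil y hy).length + (P.dropUntil y hy).length = P.length := by
      have := congrArg Walk.length (P.take_spec hy)
      rwa [SimpleGraph.Walk.length_append] at this
    have h2 : 1 ≤ (P.takeUntil y hy).length := by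
      rcases Nat.eq_zero_or_pos (P.takeUntil y hy).length with h0 | h0
      · exact absurd (SimpleGraph.Walk.eq_of_length_eq_zero h0) h.ne
      · exact h0
    have h3 : T.dist y s ≤ (P.dropUntil y hy).length := SimpleGraph.dist_le _
    have h4 : T.dist x s ≤ T.dist x y + T.dist y s := hT.isConnected.dist_triangle
    have h5 : T.dist x y = 1 := SimpleGraph.dist_eq_one_iff_adj.mpr h
    omega
  · left
    have hP' : (Walk.cons h.symm P).IsPath := hP.cons hy
    obtain ⟨Q, hQ, hQl⟩ := hT.isConnected.exists_path_of_dist y s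
    obtain ⟨r, _, hr⟩ := hT.existsUnique_path y s
    have hQr : Q = r := hr Q hQ
    have hcr : Walk.cons h.symm P = r := hr _ hP'
    have : Q.length = P.length + 1 := by
      rw [hQr, ← hcr, SimpleGraph.Walk.length_cons]
    omega

/-- In a tree, a geodesic cannot have a strict local maximum of the distance
to a fixed vertex. -/
private lemma no_peak (hT : T.IsTree) {x z y s : V} (hxz : T.Adj x z) (hzy : T.Adj z y)
    (hxy : x ≠ y) (h1 : T.dist z s = T.dist x s + 1) (h2 : T.dist z s = T.dist y s + 1) :
    False := by
  classical
  obtain ⟨Px, hPx, hPxl⟩ := hT.isConnected.exists_path_of_dist x s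
  obtain ⟨Py, hPy, hPyl⟩ := hT.isConnected.exists_path_of_dist y s
  set W : T.Walk x y := Px.append Py.reverse with hW
  -- the 2-step path x - z - y
  have hpath2 : (Walk.cons hxz (Walk.cons hzy Walk.nil)).IsPath := by
    simp [SimpleGraph.Walk.isPath_def, hxz.ne, hzy.ne, hzy.ne', hxy]
  obtain ⟨r, _, hr⟩ := hT.existsUnique_path x y
  have e1 : Walk.cons hxz (Walk.cons hzy Walk.nil) = r := hr _ hpath2
  have e2 : (W.toPath : T.Walk x y) = r := hr _ W.toPath.2
  have hzsup : z ∈ (W.toPath : T.Walk x y).support := by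
    rw [e2, ← e1]; simp
  have hzW : z ∈ W.support := SimpleGraph.Walk.support_toPath_subset W hzsup
  rw [hW, SimpleGraph.Walk.mem_support_append_iff] at hzW
  rcases hzW with hz | hz
  · have : T.dist z s ≤ (Px.dropUntil z hz).length := SimpleGraph.dist_le _
    have hlen : (Px.takeUntil z hz).length + (Px.dropUntil z hz).length = Px.length := by
      have := congrArg Walk.length (Px.take_spec hz)
      rwa [SimpleGraph.Walk.length_append] at this
    omega
  · rw [SimpleGraph.Walk.support_reverse, List.mem_reverse] at hz
    have : T.dist z s ≤ (Py.dropUntil z hz).length := SimpleGraph.dist_le _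
    have hlen : (Py.takeUntil z hz).length + (Py.dropUntil z hz).length = Py.length := by
      have := congrArg Walk.length (Py.take_spec hz)
      rwa [SimpleGraph.Walk.length_append] at this
    omega

private lemma sq_convex {a b c : ℕ}
    (h1 : a = b + 1 ∨ b = a + 1) (h2 : c = b + 1 ∨ b = c + 1)
    (h3 : ¬(b = a + 1 ∧ b = c + 1)) :
    2 * b ^ 2 + 2 ≤ a ^ 2 + c ^ 2 := by
  rcases h1 with h1 | h1 <;> rcases h2 with h2 | h2
  · subst h1; subst h2
    have e : (b + 1) ^ 2 = b ^ 2 + 2 * b + 1 := by ring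
    linarith
  · subst h2; subst h1
    have e1 : (c + 1 + 1) ^ 2 = c ^ 2 + 4 * c + 4 := by ring
    have e2 : (c + 1) ^ 2 = c ^ 2 + 2 * c + 1 := by ring
    linarith
  · subst h1; subst h2
    have e1 : (a + 1 + 1) ^ 2 = a ^ 2 + 4 * a + 4 := by ring
    have e2 : (a + 1) ^ 2 = a ^ 2 + 2 * a + 1 := by ring
    linarith
  · exact absurd ⟨h1, h2⟩ h3

end TreeFixAux

/-- If a group `G` acts on a tree `T` (by graph automorphisms, without
inversions), `A ≤ B` are subgroups with `A` of finite index in `B`, and `A`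
fixes a vertex of `T`, then `B` fixes a vertex of `T`. -/
theorem finite_index_overgroup_fixes_vertex {V : Type*} {G : Type*} [Group G]
    (T : SimpleGraph V) (hT : T.IsTree) [MulAction G V]
    (hadj : ∀ (g : G) (u v : V), T.Adj u v → T.Adj (g • u) (g • v))
    (hnoinv : ∀ (g : G) (u v : V), T.Adj u v → ¬(g • u = v ∧ g • v = u))
    (A B : Subgroup G) (hAB : A ≤ B)
    (hfi : (A.subgroupOf B).FiniteIndex)
    (v : V) (hv : ∀ a ∈ A, a • v = v) :
    ∃ u : V, ∀ b ∈ B, b • u = u := by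
  classical
  have hconn := hT.isConnected
  -- the action preserves distances
  have hdist : ∀ (g : G) (u w : V), T.dist (g • u) (g • w) = T.dist u w := by
    have key : ∀ (g : G) (u w : V), T.dist (g • u) (g • w) ≤ T.dist u w := by
      intro g u w
      obtain ⟨p, hp⟩ := hconn.exists_walk_length_eq_dist u w
      let F : T →g T := ⟨fun x => g • x, fun {a b} h => hadj g a b h⟩
      have := SimpleGraph.dist_le (p.map F)
      rwa [SimpleGraph.Walk.length_map, hp] at this
    intro g u w
    refine le_antisymm (key g u w) ?_
    have := key g⁻¹ (g • u) (g • w)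
    simpa using this
  -- the orbit of `v` under `B` is finite
  haveI : Finite (B ⧸ A.subgroupOf B) := inferInstance
  have horbfin : (Set.range fun b : B => (b : G) • v).Finite := by
    have hsub : (Set.range fun b : B => (b : G) • v) ⊆
        Set.range (Quotient.lift (fun b : B => (b : G) • v)
          (by
            intro b c hbc
            have hbc' : b⁻¹ * c ∈ A.subgroupOf B := QuotientGroup.leftRel_apply.mp hbc
            have hmem : ((b⁻¹ * c : B) : G) ∈ A := Subgroup.mem_subgroupOf.mp hbc'
            have : (c : G) • v = (b : G) • (((b⁻¹ * c : B) : G) • v) := by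
              rw [← mul_smul]
              congr 1
              push_cast
              group
            show (b : G) • v = (c : G) • v
            rw [this, hv _ hmem]) : B ⧸ A.subgroupOf B → V) := by
      rintro x ⟨b, rfl⟩
      exact ⟨QuotientGroup.mk b, rfl⟩
    exact (Set.finite_range _).subset hsub
  set S : Finset V := horbfin.toFinset with hS
  have hSmem : ∀ s, s ∈ S ↔ ∃ b : B, (b : G) • v = s := by
    intro s; simp [hS, Set.Finite.mem_toFinset]
  have hvS : v ∈ S := (hSmem v).mpr ⟨1, by simp⟩
  have hScard : 1 ≤ S.card := Finset.card_pos.mpr ⟨v, hvS⟩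
  -- S is invariant under B
  have hSinv : ∀ b ∈ B, ∀ s ∈ S, b • s ∈ S := by
    intro b hb s hs
    obtain ⟨c, rfl⟩ := (hSmem s).mp hs
    exact (hSmem _).mpr ⟨⟨b, hb⟩ * c, by rw [Subgroup.coe_mul, mul_smul]⟩
  -- the function to minimize
  set f : V → ℕ := fun u => ∑ s ∈ S, (T.dist u s) ^ 2 with hf
  have hfinv : ∀ b ∈ B, ∀ u, f (b • u) = f u := by
    intro b hb u
    rw [hf]
    refine (Finset.sum_nbij' (fun s => b • s) (fun s => b⁻¹ • s) ?_ ?_ ?_ ?_ ?_).symm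
    · intro s hs; exact hSinv b hb s hs
    · intro s hs
      have := hSinv b⁻¹ (inv_mem hb) s hs
      exact this
    · intro s _; simp
    · intro s _; simp
    · intro s _; rw [hdist b u s]
  -- minimum of f
  set m : ℕ := sInf (Set.range f) with hm
  have hrange : (Set.range f).Nonempty := ⟨f v, v, rfl⟩
  obtain ⟨u₀, hu₀⟩ : ∃ u, f u = m := Nat.sInf_mem hrange
  have hmin : ∀ u, m ≤ f u := fun u => Nat.sInf_le ⟨u, rfl⟩
  -- key geometric fact: two minimizers are at distance at most 1
  have hkey : ∀ u w : V, f u = m → f w = m → T.dist u w ≤ 1 := by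
    intro u w hu hw
    by_contra hge
    push_neg at hge
    obtain ⟨p, hp, hpl⟩ := hconn.exists_path_of_dist u w
    set k := p.length with hk
    have hk2 : 2 ≤ k := by omega
    set F : ℕ → ℕ := fun i => f (p.getVert i) with hF
    have hF0 : F 0 = m := by simp [hF, SimpleGraph.Walk.getVert_zero, hu]
    have hFk : F k = m := by simp [hF, hk, SimpleGraph.Walk.getVert_length, hw]
    have hFmin : ∀ i, m ≤ F i := fun i => hmin _
    -- convexity of F
    have hconv : ∀ i, 1 ≤ i → i + 1 ≤ k → 2 * F i + 2 ≤ F (i - 1) + F (i + 1) := by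
      intro i hi1 hik
      have hstep : ∀ s ∈ S,
          2 * (T.dist (p.getVert i) s) ^ 2 + 2 ≤
            (T.dist (p.getVert (i - 1)) s) ^ 2 + (T.dist (p.getVert (i + 1)) s) ^ 2 := by
        intro s _
        have hadj1 : T.Adj (p.getVert (i - 1)) (p.getVert i) := by
          have := p.adj_getVert_succ (i := i - 1) (by omega)
          rwa [show i - 1 + 1 = i by omega] at this
        have hadj2 : T.Adj (p.getVert i) (p.getVert (i + 1)) := by
          exact p.adj_getVert_succ (by omega)
        have hne : p.getVert (i - 1) ≠ p.getVert (i + 1) := by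
          intro hEq
          have := getVert_inj' p hp (i - 1) (i + 1) (by omega) (by omega) hEq
          omega
        have h1 := dist_adj_step hT s hadj1
        have h2 := dist_adj_step hT s hadj2
        have h3 : ¬(T.dist (p.getVert i) s = T.dist (p.getVert (i - 1)) s + 1 ∧
            T.dist (p.getVert i) s = T.dist (p.getVert (i + 1)) s + 1) := by
          rintro ⟨ha, hb⟩
          exact no_peak hT hadj1 hadj2 hne ha hb
        exact sq_convex (by tauto) (by tauto) h3
      calc 2 * F i + 2 ≤ 2 * F i + 2 * S.card := by omega
        _ = ∑ s ∈ S, (2 * (T.dist (p.getVert i) s) ^ 2 + 2) := by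
            simp [hF, hf, Finset.mul_sum, Finset.sum_add_distrib, mul_comm]
        _ ≤ ∑ s ∈ S, ((T.dist (p.getVert (i - 1)) s) ^ 2
              + (T.dist (p.getVert (i + 1)) s) ^ 2) := Finset.sum_le_sum hstep
        _ = F (i - 1) + F (i + 1) := by simp [hF, hf, Finset.sum_add_distrib]
    -- derive a contradiction: increments grow
    have hgrow : ∀ j, j + 1 ≤ k → (F 1 : ℤ) - F 0 + 2 * j ≤ (F (j + 1) : ℤ) - F j := by
      intro j
      induction j with
      | zero => intro _; simp
      | succ n ih =>
        intro hjk
        have h1 := ih (by omega)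
        have h2 := hconv (n + 1) (by omega) (by omega)
        have h2' : (2 * F (n + 1) + 2 : ℤ) ≤ F n + F (n + 2) := by
          have h2'' := h2
          simp only [show n + 1 - 1 = n from by omega,
            show n + 1 + 1 = n + 2 from by omega] at h2''
          exact_mod_cast h2''
        simp only [show n + 1 + 1 = n + 2 from rfl]
        push_cast
        push_cast at h1
        omega
    have hlast := hgrow (k - 1) (by omega)
    rw [show k - 1 + 1 = k by omega] at hlast
    have h1 : (m : ℤ) ≤ F 1 := by exact_mod_cast hFmin 1
    have h2 : (m : ℤ) ≤ F (k - 1) := by exact_mod_cast hFmin (k - 1)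
    have h0 : (F 0 : ℤ) = m := by exact_mod_cast hF0
    have hkz : (F k : ℤ) = m := by exact_mod_cast hFk
    have : (2 : ℤ) * (k - 1) ≤ 0 := by omega
    have hk1 : (1 : ℤ) ≤ (k : ℤ) - 1 := by exact_mod_cast (by omega : (1 : ℤ) ≤ (k : ℤ) - 1)
    omega
  -- minimizers are pairwise equal or adjacent
  have hadj_of_ne : ∀ u w : V, f u = m → f w = m → u ≠ w → T.Adj u w := by
    intro u w hu hw hne
    have h1 := hkey u w hu hw
    have h0 : T.dist u w ≠ 0 := fun hh => hne (hconn.dist_eq_zero_iff.mp hh)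
    have : T.dist u w = 1 := by omega
    exact SimpleGraph.dist_eq_one_iff_adj.mp this
  -- no triangles in a tree
  have hnotri : ∀ x y z : V, T.Adj x y → T.Adj y z → T.Adj x z → False := by
    intro x y z h1 h2 h3
    obtain ⟨r, _, hr⟩ := hT.existsUnique_path x z
    have hp1 : (Walk.cons h3 Walk.nil).IsPath := by
      simp [SimpleGraph.Walk.isPath_def, h3.ne]
    have hp2 : (Walk.cons h1 (Walk.cons h2 Walk.nil)).IsPath := by
      simp [SimpleGraph.Walk.isPath_def, h1.ne, h2.ne, h2.ne', h3.ne]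
    have e1 := hr _ hp1
    have e2 := hr _ hp2
    have := congrArg Walk.length (e1.trans e2.symm)
    simp at this
  -- conclusion
  refine ⟨u₀, fun b hb => ?_⟩
  by_contra hbu
  set u₁ := b • u₀ with hu₁
  have hu₁m : f u₁ = m := by rw [hu₁, hfinv b hb, hu₀]
  have hne01 : u₀ ≠ u₁ := fun h => hbu h.symm
  have hadj01 : T.Adj u₀ u₁ := hadj_of_ne _ _ hu₀ hu₁m hne01
  have hbu₁ : f (b • u₁) = m := by rw [hfinv b hb, hu₁m]
  have hne1 : b • u₁ ≠ u₁ := by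
    intro hEq
    rw [hu₁] at hEq
    exact hbu (MulAction.injective b hEq)
  by_cases hcase : b • u₁ = u₀
  · exact hnoinv b u₀ u₁ hadj01 ⟨rfl, hcase⟩
  · have hadj1 : T.Adj u₁ (b • u₁) := hadj_of_ne _ _ hu₁m hbu₁ (Ne.symm hne1)
    have hadj0 : T.Adj u₀ (b • u₁) := hadj_of_ne _ _ hu₀ hbu₁ (Ne.symm hcase)
    exact hnotri u₀ u₁ (b • u₁) hadj01 hadj1 hadj0
end

section
/- Let Γ be a graph with vertex set S, V ⊆ S, and let A, B ⊆ V be such that A separates two vertices b₁, b₂ of B in Γ, where B = {b₁,b₂} ∪ M with b₁, b₂ non-adjacent, every vertex of M adjacent to both b₁ and b₂ (so M ⊆ A by the adjacency lemma), and assume {b₁} ∪ M does not separate V in Γ and {b₂} ∪ M does not separate V in Γ. If B does not separate the set A in Γ (i.e., A − M lies in one component K of Γ − B), then every component of Γ − B meeting V nontrivially, other than K, leads to a contradiction; hence B separates A in Γ whenever B separates V into at least two components meeting V. -/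
/-!
Pick `y, z ∈ V` separated by `B`. A walk from `y` to `z` avoiding `{b₁} ∪ M` must meet `B`, hence
passes through `b₂`, so some neighbour of `b₂` lies in the component of `y` in `Γ − B`; likewise for
`b₁`. Joining `b₁` to `b₂` through that component gives a walk that must meet `A`, and it can only do
so inside the component. So the components of `y` and of `z` in `Γ − B` both contain vertices of `A`,
and these are separated by `B`.
-/

/-- `X` separates the vertices `y` and `z` in `Γ`: neither lies in `X` and
every walk from `y` to `z` meets `X`. -/
def SeparatesVerts {S : Type*} (Γ : SimpleGraph S) (X : Set S) (y z : S) : Prop :=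
  y ∉ X ∧ z ∉ X ∧ ∀ w : Γ.Walk y z, ∃ v ∈ w.support, v ∈ X

/-- `X` separates the set `Y` in `Γ`: some two vertices of `Y − X` are
separated by `X`. -/
def SeparatesSet {S : Type*} (Γ : SimpleGraph S) (X Y : Set S) : Prop :=
  ∃ y ∈ Y, ∃ z ∈ Y, SeparatesVerts Γ X y z

def ReachableAvoiding {S : Type*} (Γ : SimpleGraph S) (X : Set S) (u v : S) : Prop :=
  ∃ w : Γ.Walk u v, ∀ x ∈ w.support, x ∉ X

section

variable {S : Type*} {Γ : SimpleGraph S} {X : Set S} {u v w : S}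

open SimpleGraph

namespace ReachableAvoiding

theorem symm (h : ReachableAvoiding Γ X u v) : ReachableAvoiding Γ X v u := by
  obtain ⟨p, hp⟩ := h
  exact ⟨p.reverse, fun x hx => hp x (by simpa using hx)⟩

theorem trans (h₁ : ReachableAvoiding Γ X u v) (h₂ : ReachableAvoiding Γ X v w) :
    ReachableAvoiding Γ X u w := by
  obtain ⟨p, hp⟩ := h₁
  obtain ⟨q, hq⟩ := h₂
  refine ⟨p.append q, fun x hx => ?_⟩
  rcases (Walk.mem_support_append_iff p q).mp hx with hx | hx
  exacts [hp x hx, hq x hx]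

theorem left_notMem (h : ReachableAvoiding Γ X u v) : u ∉ X := by
  obtain ⟨p, hp⟩ := h
  exact hp u p.start_mem_support

theorem right_notMem (h : ReachableAvoiding Γ X u v) : v ∉ X :=
  h.symm.left_notMem

end ReachableAvoiding

theorem SimpleGraph.Walk.reachableAvoiding_of_mem_support (p : Γ.Walk u v) (hp : ∀ x ∈ p.support, x ∉ X)
    (hw : w ∈ p.support) : ReachableAvoiding Γ X u w := by
  classical
  exact ⟨p.takeUntil w hw, fun x hx => hp x (p.support_takeUntil_subset_support hw hx)⟩

theorem SimpleGraph.Walk.exists_adj_reachableAvoiding_of_mem_support {T : Set S} (p : Γ.Walk u v)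
    (hu : u ∉ T) (hT : ∃ t ∈ p.support, t ∈ T) :
    ∃ t ∈ p.support, t ∈ T ∧ ∃ x, Γ.Adj x t ∧ ReachableAvoiding Γ T u x := by
  induction p with
  | nil =>
    obtain ⟨t, ht, htT⟩ := hT
    rw [Walk.support_nil, List.mem_singleton] at ht
    exact absurd (ht ▸ htT) hu
  | @cons u x v hux q ih =>
    by_cases hx : x ∈ T
    · exact ⟨x, by simp, hx, u, hux, ⟨Walk.nil, by simpa using hu⟩⟩
    · obtain ⟨t, ht, htT⟩ := hT
      have htq : t ∈ q.support := by
        rw [Walk.support_cons, List.mem_cons] at ht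
        exact ht.resolve_left fun h => hu (h ▸ htT)
      obtain ⟨t, ht, htT, y, hyt, hxy⟩ := ih hx ⟨t, htq, htT⟩
      have hux' : ReachableAvoiding Γ T u x := ⟨Walk.cons hux Walk.nil, by simp [hu, hx]⟩
      exact ⟨t, by simp [ht], htT, y, hyt, hux'.trans hxy⟩

theorem separatesVerts_iff {y z : S} :
    SeparatesVerts Γ X y z ↔ y ∉ X ∧ z ∉ X ∧ ¬ ReachableAvoiding Γ X y z := by
  simp [SeparatesVerts, ReachableAvoiding]

theorem SeparatesVerts.symm {y z : S} (h : SeparatesVerts Γ X y z) : SeparatesVerts Γ X z y := by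
  rw [separatesVerts_iff] at h ⊢
  exact ⟨h.2.1, h.1, fun hzy => h.2.2 hzy.symm⟩

theorem SeparatesVerts.of_reachableAvoiding {y z y' z' : S} (h : SeparatesVerts Γ X y z)
    (hy : ReachableAvoiding Γ X y y') (hz : ReachableAvoiding Γ X z z') :
    SeparatesVerts Γ X y' z' := by
  rw [separatesVerts_iff] at h ⊢
  exact ⟨hy.right_notMem, hz.right_notMem, fun h' => h.2.2 ((hy.trans h').trans hz.symm)⟩

theorem reachableAvoiding_of_not_separatesSet {Y : Set S} {y z : S} (h : ¬ SeparatesSet Γ X Y)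
    (hy : y ∈ Y) (hz : z ∈ Y) (hyX : y ∉ X) (hzX : z ∉ X) : ReachableAvoiding Γ X y z := by
  by_contra hyz
  exact h ⟨y, hy, z, hz, separatesVerts_iff.mpr ⟨hyX, hzX, hyz⟩⟩

theorem exists_adj_reachableAvoiding_of_not_separatesSet {Y : Set S} {b y z : S}
    (hX : ¬ SeparatesSet Γ X Y) (hy : y ∈ Y) (hz : z ∈ Y)
    (hyz : SeparatesVerts Γ (insert b X) y z) :
    ∃ x, Γ.Adj x b ∧ ReachableAvoiding Γ (insert b X) y x := by
  obtain ⟨hyB, hzB, hwalk⟩ := hyz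
  obtain ⟨p, hp⟩ := reachableAvoiding_of_not_separatesSet hX hy hz
    (fun h => hyB (Set.mem_insert_of_mem b h)) (fun h => hzB (Set.mem_insert_of_mem b h))
  obtain ⟨t, ht, htB, x, hxt, hyx⟩ := p.exists_adj_reachableAvoiding_of_mem_support hyB (hwalk p)
  obtain rfl : t = b := (Set.mem_insert_iff.mp htB).resolve_right (hp t ht)
  exact ⟨x, hxt, hyx⟩

theorem exists_mem_reachableAvoiding_of_separatesVerts {A B : Set S} {b₁ b₂ c x₁ x₂ : S}
    (hA : SeparatesVerts Γ A b₁ b₂) (hx₁ : Γ.Adj x₁ b₁) (hx₂ : Γ.Adj x₂ b₂)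
    (hcx₁ : ReachableAvoiding Γ B c x₁) (hcx₂ : ReachableAvoiding Γ B c x₂) :
    ∃ a ∈ A, a ∉ B ∧ ReachableAvoiding Γ B c a := by
  obtain ⟨hb₁, hb₂, hwalk⟩ := hA
  obtain ⟨q, hq⟩ := hcx₁.symm.trans hcx₂
  obtain ⟨a, ha, haA⟩ := hwalk (Walk.cons hx₁.symm (q.concat hx₂))
  have haq : a ∈ q.support := by
    simp only [Walk.support_cons, Walk.support_concat, List.mem_cons, List.mem_append,
      List.mem_nil_iff, or_false] at ha
    rcases ha with rfl | ha | rfl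
    exacts [absurd haA hb₁, ha, absurd haA hb₂]
  exact ⟨a, haA, hq a haq, hcx₁.trans (q.reachableAvoiding_of_mem_support hq haq)⟩

end

theorem separates_symm_for_crossing_general {S : Type*} (Γ : SimpleGraph S)
    (V A B M : Set S) (b₁ b₂ : S)
    (hB : B = {b₁, b₂} ∪ M)
    (hsep : SeparatesVerts Γ A b₁ b₂)
    (hn1 : ¬ SeparatesSet Γ ({b₁} ∪ M) V)
    (hn2 : ¬ SeparatesSet Γ ({b₂} ∪ M) V)
    (hVsep : SeparatesSet Γ B V) :
    SeparatesSet Γ B A := by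
  have hB₁ : B = insert b₂ ({b₁} ∪ M) := by ext; simp [hB]; tauto
  have hB₂ : B = insert b₁ ({b₂} ∪ M) := by ext; simp [hB]; tauto
  have meets_A : ∀ c ∈ V, ∀ d ∈ V, SeparatesVerts Γ B c d →
      ∃ a ∈ A, a ∉ B ∧ ReachableAvoiding Γ B c a := by
    intro c hc d hd hcd
    obtain ⟨x₁, hx₁, hcx₁⟩ :=
      exists_adj_reachableAvoiding_of_not_separatesSet hn2 hc hd (hB₂ ▸ hcd)
    obtain ⟨x₂, hx₂, hcx₂⟩ :=
      exists_adj_reachableAvoiding_of_not_separatesSet hn1 hc hd (hB₁ ▸ hcd)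
    exact exists_mem_reachableAvoiding_of_separatesVerts hsep hx₁ hx₂ (hB₂ ▸ hcx₁) (hB₁ ▸ hcx₂)
  obtain ⟨y, hy, z, hz, hyz⟩ := hVsep
  obtain ⟨a₁, ha₁, -, hya₁⟩ := meets_A y hy z hz hyz
  obtain ⟨a₂, ha₂, -, hza₂⟩ := meets_A z hz y hy hyz.symm
  exact ⟨a₁, ha₁, a₂, ha₂, hyz.of_reachableAvoiding hya₁ hza₂⟩

/-- If `A` separates `b₁` from `b₂` in `Γ`, where `B = {b₁,b₂} ∪ M` with
`b₁, b₂` non-adjacent and every vertex of `M` adjacent to both (so `M ⊆ A`),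
neither `{b₁} ∪ M` nor `{b₂} ∪ M` separates `V`, and `B` separates `V`, then
`B` separates `A` in `Γ`. -/
theorem separates_symm_for_crossing {S : Type*} (Γ : SimpleGraph S)
    (V A B M : Set S) (b₁ b₂ : S)
    (hAV : A ⊆ V) (hBV : B ⊆ V)
    (hB : B = {b₁, b₂} ∪ M) (hne : b₁ ≠ b₂) (hnadj : ¬ Γ.Adj b₁ b₂)
    (hMadj : ∀ m ∈ M, Γ.Adj m b₁ ∧ Γ.Adj m b₂)
    (hMA : M ⊆ A)
    (hsep : SeparatesVerts Γ A b₁ b₂)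
    (hn1 : ¬ SeparatesSet Γ ({b₁} ∪ M) V)
    (hn2 : ¬ SeparatesSet Γ ({b₂} ∪ M) V)
    (hVsep : SeparatesSet Γ B V) :
    SeparatesSet Γ B A :=
  separates_symm_for_crossing_general Γ V A B M b₁ b₂ hB hsep hn1 hn2 hVsep
end

section
/- Let (W,S) be a Coxeter system with presentation diagram Γ, let Ψ be a visual graph of groups decomposition of W (a tree of subsets of S with edge maps inclusions satisfying the subtree condition), let E' be an edge of Ψ with label E ⊆ S, and let x, y ∈ S − E lie in vertex labels X and Y on opposite sides of E' in the tree Ψ. Then E separates x from y in Γ: every path in Γ from x to y meets E. -/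
/-- Let `(W,S)` be a Coxeter system with presentation diagram `Γ` (vertices
`S`, edges where the Coxeter matrix is nonzero, i.e. the label is finite) and
let `Ψ` be a visual graph of groups decomposition of `W`: a tree with vertex
labels `L` and edge labels `Le` (contained in the labels of the endpoints),
such that every edge of `Γ` lies in some vertex label and, for each `s ∈ S`,
the vertices and edges whose labels contain `s` form a nonempty subtree. If
`E' = {u₀, v₀}` is an edge of `Ψ` with label `E = Le u₀ v₀`, and
`x, y ∈ S − E` lie in vertex labels `X` and `Y` on opposite sides of `E'`,
then `E` separates `x` from `y` in `Γ`: every walk in `Γ` from `x` to `y`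
meets `E`. -/
theorem edge_label_separates {S : Type*} {W : Type*} [Group W]
    (M : CoxeterMatrix S) (cs : CoxeterSystem M W)
    {Vt : Type*} (Ψ : SimpleGraph Vt) (hΨ : Ψ.IsTree)
    (L : Vt → Set S) (Le : Vt → Vt → Set S)
    (hLesymm : ∀ u v : Vt, Le u v = Le v u)
    (hLe : ∀ u v : Vt, Ψ.Adj u v → Le u v ⊆ L u ∩ L v)
    (hedge : ∀ s t : S, s ≠ t → M s t ≠ 0 → ∃ v : Vt, s ∈ L v ∧ t ∈ L v)
    (hsub : ∀ s : S,
      ((SimpleGraph.fromRel fun u v => Ψ.Adj u v ∧ s ∈ Le u v).induce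
        {v | s ∈ L v}).Connected)
    (u₀ v₀ : Vt) (hadj : Ψ.Adj u₀ v₀)
    (X Y : Vt) (hopp : ¬ (Ψ.deleteEdges {s(u₀, v₀)}).Reachable X Y)
    (x y : S) (hxX : x ∈ L X) (hyY : y ∈ L Y)
    (hxE : x ∉ Le u₀ v₀) (hyE : y ∉ Le u₀ v₀) :
    ∀ w : (SimpleGraph.fromRel fun s t : S => M s t ≠ 0).Walk x y,
      ∃ v ∈ w.support, v ∈ Le u₀ v₀ := by
  intro w
  by_contra hcon
  push_neg at hcon
  set G' := Ψ.deleteEdges {s(u₀, v₀)} with hG'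
  -- Lemma A: vertices carrying a letter s ∉ E are all G'-reachable
  have lemA : ∀ s : S, s ∉ Le u₀ v₀ → ∀ u v : Vt, s ∈ L u → s ∈ L v →
      G'.Reachable u v := by
    intro s hs u v hu hv
    have hr := (hsub s) ⟨u, hu⟩ ⟨v, hv⟩
    refine SimpleGraph.Reachable.map
      (⟨Subtype.val, ?_⟩ : ((SimpleGraph.fromRel fun a b => Ψ.Adj a b ∧ s ∈ Le a b).induce
        {v | s ∈ L v}) →g G') hr
    rintro ⟨a, ha⟩ ⟨b, hb⟩ hab
    simp only [SimpleGraph.comap_adj, SimpleGraph.fromRel_adj] at hab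
    obtain ⟨hne, hor⟩ := hab
    have hadj' : Ψ.Adj a b ∧ s ∈ Le a b := by
      rcases hor with h | h
      · exact h
      · exact ⟨h.1.symm, (hLesymm a b) ▸ h.2⟩
    rw [hG', SimpleGraph.deleteEdges_adj]
    refine ⟨hadj'.1, ?_⟩
    simp only [Set.mem_singleton_iff, Sym2.eq_iff]
    rintro (⟨h1, h2⟩ | ⟨h1, h2⟩) <;> subst h1 <;> subst h2
    · exact hs hadj'.2
    · exact hs ((hLesymm _ _) ▸ hadj'.2)
  have key : ∀ a b : S,
      ∀ w' : (SimpleGraph.fromRel fun s t : S => M s t ≠ 0).Walk a b,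
      (∀ v ∈ w'.support, v ∉ Le u₀ v₀) →
      ∀ va, a ∈ L va → ∀ vb, b ∈ L vb → G'.Reachable va vb := by
    intro a b w'
    induction w' with
    | nil =>
      intro hsup va hva vb hvb
      exact lemA _ (hsup _ (by simp)) va vb hva hvb
    | @cons a c b h p ih =>
      intro hsup va hva vb hvb
      have haE : a ∉ Le u₀ v₀ := hsup a (by simp)
      have hcE : c ∉ Le u₀ v₀ := by
        apply hsup c
        simp [SimpleGraph.Walk.support_cons, p.start_mem_support]
      rw [SimpleGraph.fromRel_adj] at h
      obtain ⟨hne, hM⟩ := h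
      have hM' : M a c ≠ 0 := by
        rcases hM with h | h
        · exact h
        · rw [M.symmetric a c]; exact h
      obtain ⟨v, hav, hcv⟩ := hedge a c hne hM'
      have h1 : G'.Reachable va v := lemA a haE va v hva hav
      have h2 : G'.Reachable v vb := ih
        (fun z hz => hsup z (by simp [SimpleGraph.Walk.support_cons, hz])) v hcv vb hvb
      exact h1.trans h2
  exact hopp (key x y w hcon X hxX Y hyY)
end
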